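/- arXiv:0812.3404 — 2 statements merged into one kernel-verified Lean document; each statement's English description precedes it below -/
import Mathlib

section
/- Fix integers $n,m\ge 1$, set $l_0=\min(n,\lfloor (m+1)/3\rfloor)$, and let $l\in\{0,1,\ldots,l_0\}$. Consider the minimization of $F(\alpha,\beta)=\sum_{j=1}^{n}(2n-2j+1)\alpha_j+\sum_{k=1}^{n\wedge m}(n+m-2k+1)\beta_k - m\sum_{j=1}^{n}(1-\alpha_j)^+ + \sum_{j=1}^{n}\sum_{k=1}^{n\wedge m}(1-\alpha_j-\beta_k)^+$ over all $0\le\alpha_1\le\ldots\le\alpha_{n}$ and $0\le\beta_1\le\ldots\le\beta_{n\wedge m}$ satisfying $\sum_{j=1}^{n}(1-\alpha_j)^+ + \tfrac12\sum_{k=1}^{n\wedge m}(1-\beta_k)^+\le r$ and $\alpha_j+\beta_k\ge 1$ whenever $j+k=n+1$, with target rate $r=l/2$. Then the point given by $\alpha_1^*=\ldots=\alpha_n^*=1$, $\beta_1^*=\ldots=\beta_l^*=0$, $\beta_{l+1}^*=\ldots=\beta_{n\wedge m}^*=1$ satisfies all the constraints and has objective value $F(\alpha^*,\beta^*)=n^2+(m-l)(n-l)$;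 consequently the minimum is at most $n^2+(m-l)(n-l)$. -/
/-- The objective function of the diversity optimization problem (case `p = n`). -/
noncomputable def Fobj (n m : ℕ) (α : Fin n → ℝ) (β : Fin (min n m) → ℝ) : ℝ :=
  (∑ j : Fin n, (2 * (n : ℝ) - 2 * ((j : ℕ) + 1) + 1) * α j) +
    (∑ k : Fin (min n m), ((n : ℝ) + m - 2 * ((k : ℕ) + 1) + 1) * β k) -
    m * (∑ j : Fin n, max (1 - α j) 0) +
    ∑ j : Fin n, ∑ k : Fin (min n m), max (1 - α j - β k) 0

/-- The feasible set of the diversity optimization problem at `t = 1/2`, with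
target rate `r`. -/
def Feasible (n m : ℕ) (r : ℝ) (α : Fin n → ℝ) (β : Fin (min n m) → ℝ) : Prop :=
  (∀ j, 0 ≤ α j) ∧ Monotone α ∧ (∀ k, 0 ≤ β k) ∧ Monotone β ∧
    (∑ j : Fin n, max (1 - α j) 0) +
      (1 / 2) * (∑ k : Fin (min n m), max (1 - β k) 0) ≤ r ∧
    (∀ (j : Fin n) (k : Fin (min n m)), (j : ℕ) + (k : ℕ) + 1 = n → 1 ≤ α j + β k)
lemma gsum (c : ℝ) : ∀ N : ℕ, ∑ k ∈ Finset.range N, (c - 1 - 2*(k:ℝ)) = N*(c-N)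
  | 0 => by simp
  | (N+1) => by
    rw [Finset.sum_range_succ, gsum c N]
    push_cast; ring

lemma split_sum (f : ℕ → ℝ) {l p : ℕ} (h : l ≤ p) :
    ∑ k ∈ Finset.range p, f k = ∑ k ∈ Finset.range l, f k + ∑ k ∈ Finset.Ico l p, f k := by
  simp only [Finset.range_eq_Ico]
  exact (Finset.sum_Ico_consecutive _ (Nat.zero_le l) h).symm

theorem stmt_14 (n m : ℕ) (hn : 1 ≤ n) (hm : 1 ≤ m) (l : ℕ)
    (hl : l ≤ min n ((m + 1) / 3)) :
    Feasible n m ((l : ℝ) / 2)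
        (fun _ => 1) (fun k => if (k : ℕ) < l then 0 else 1) ∧
    Fobj n m (fun _ => 1) (fun k => if (k : ℕ) < l then 0 else 1) =
      (n : ℝ) ^ 2 + ((m : ℝ) - l) * ((n : ℝ) - l) ∧
    sInf {x : ℝ | ∃ (α : Fin n → ℝ) (β : Fin (min n m) → ℝ),
        Feasible n m ((l : ℝ) / 2) α β ∧ x = Fobj n m α β} ≤
      (n : ℝ) ^ 2 + ((m : ℝ) - l) * ((n : ℝ) - l) := by
  have hln : l ≤ n := le_trans hl (min_le_left _ _)
  have hlm : l ≤ m := by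
    have := le_trans hl (min_le_right _ _); omega
  have hlp : l ≤ min n m := le_min hln hlm
  -- feasibility
  have hfeas : Feasible n m ((l:ℝ)/2) (fun _ => 1)
      (fun k => if (k : ℕ) < l then 0 else 1) := by
    refine ⟨fun j => zero_le_one, monotone_const, ?_, ?_, ?_, ?_⟩
    · intro k; dsimp only; split_ifs <;> norm_num
    · intro a b hab
      have hab' : (a:ℕ) ≤ (b:ℕ) := hab
      dsimp only; split_ifs <;> norm_num; omega
    · have h1 : ∀ k : Fin (min n m),
          max (1 - (if (k:ℕ) < l then (0:ℝ) else 1)) 0 = if (k:ℕ) < l then 1 else 0 := by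
        intro k; split_ifs <;> norm_num
      simp only [h1, sub_self, max_self, Finset.sum_const, smul_zero]
      rw [Fin.sum_univ_eq_sum_range (fun k => if k < l then (1:ℝ) else 0),
        split_sum _ hlp]
      rw [Finset.sum_congr rfl (fun k hk => if_pos (Finset.mem_range.mp hk)),
        Finset.sum_congr rfl
          (fun k hk => if_neg (by have := (Finset.mem_Ico.mp hk).1; omega) :
            ∀ k ∈ Finset.Ico l (min n m), (if k < l then (1:ℝ) else 0) = 0)]
      simp; ring_nf; linarith [le_refl ((l:ℝ)/2)]
    · intro j k _
      dsimp only; split_ifs <;> norm_num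
  have hpnm : ((min n m : ℕ) : ℝ) * ((n:ℝ) + m - ((min n m : ℕ):ℝ)) = n*m := by
    rcases le_total n m with h|h
    · rw [min_eq_left h]; ring
    · rw [min_eq_right h]; ring
  have hval : Fobj n m (fun _ => 1) (fun k => if (k : ℕ) < l then 0 else 1) =
      (n : ℝ) ^ 2 + ((m : ℝ) - l) * ((n : ℝ) - l) := by
    unfold Fobj
    have hA : (∑ j : Fin n, (2 * (n : ℝ) - 2 * ((j : ℕ) + 1) + 1) * (1:ℝ)) = (n:ℝ)*n := by
      have h : ∀ j : Fin n, (2 * (n : ℝ) - 2 * ((j : ℕ) + 1) + 1) * (1:ℝ)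
          = (2*(n:ℝ)) - 1 - 2*((j:ℕ):ℝ) := fun j => by ring
      rw [Finset.sum_congr rfl (fun j _ => h j),
        Fin.sum_univ_eq_sum_range (fun k => (2*(n:ℝ)) - 1 - 2*(k:ℝ)), gsum]
      ring
    have hIco : ∑ k ∈ Finset.Ico l (min n m), (((n:ℝ)+m) - 1 - 2*(k:ℝ))
        = ((min n m : ℕ):ℝ)*((n:ℝ)+m-((min n m : ℕ):ℝ)) - (l:ℝ)*((n:ℝ)+m-(l:ℝ)) := by
      have h := split_sum (fun k => ((n:ℝ)+m) - 1 - 2*(k:ℝ)) hlp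
      rw [gsum, gsum] at h
      linarith
    have hB : (∑ k : Fin (min n m), ((n : ℝ) + m - 2 * ((k : ℕ) + 1) + 1) *
        (if (k:ℕ) < l then 0 else 1)) = (n:ℝ)*m - (l:ℝ)*((n:ℝ)+m-(l:ℝ)) := by
      have h2 : ∀ k : Fin (min n m), ((n : ℝ) + m - 2 * ((k : ℕ) + 1) + 1) *
          (if (k:ℕ) < l then (0:ℝ) else 1)
          = if (k:ℕ) < l then 0 else (((n:ℝ)+m) - 1 - 2*((k:ℕ):ℝ)) := by
        intro k; split_ifs <;> ring
      rw [Finset.sum_congr rfl (fun k _ => h2 k),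
        Fin.sum_univ_eq_sum_range (fun k => if k < l then (0:ℝ) else ((n:ℝ)+m) - 1 - 2*(k:ℝ)),
        split_sum _ hlp,
        Finset.sum_congr rfl (fun k hk => if_pos (Finset.mem_range.mp hk)),
        Finset.sum_congr rfl
          (fun k hk => if_neg (by have := (Finset.mem_Ico.mp hk).1; omega) :
            ∀ k ∈ Finset.Ico l (min n m),
              (if k < l then (0:ℝ) else ((n:ℝ)+m) - 1 - 2*(k:ℝ))
                = ((n:ℝ)+m) - 1 - 2*(k:ℝ)),
        hIco]
      simp only [Finset.sum_const_zero, zero_add]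
      rw [hpnm]
    have hz : (∑ x : Fin (min n m), max ((0:ℝ) - (if (x:ℕ) < l then (0:ℝ) else 1)) 0) = 0 :=
      Finset.sum_eq_zero fun x _ => by split_ifs <;> norm_num
    simp only [hA, hB, sub_self, max_self, Finset.sum_const, smul_zero,
      Finset.sum_const_zero, mul_zero, add_zero, sub_zero]
    simp only [hz, smul_zero, add_zero]
    ring
  refine ⟨hfeas, hval, ?_⟩
  apply csInf_le
  · refine ⟨-((m:ℝ)*n), ?_⟩
    rintro x ⟨α, β, ⟨hα0, hαm, hβ0, hβm, _, _⟩, rfl⟩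
    unfold Fobj
    have hA : (0:ℝ) ≤ ∑ j : Fin n, (2 * (n : ℝ) - 2 * ((j : ℕ) + 1) + 1) * α j := by
      refine Finset.sum_nonneg fun j _ => mul_nonneg ?_ (hα0 j)
      have hj : ((j:ℕ):ℝ) + 1 ≤ n := by exact_mod_cast j.isLt
      linarith
    have hB : (0:ℝ) ≤ ∑ k : Fin (min n m), ((n : ℝ) + m - 2 * ((k : ℕ) + 1) + 1) * β k := by
      refine Finset.sum_nonneg fun k _ => mul_nonneg ?_ (hβ0 k)
      have hk : 2 * ((k:ℕ) + 1) ≤ n + m := by have := k.isLt; omega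
      have hk' : 2 * (((k:ℕ):ℝ) + 1) ≤ (n:ℝ) + m := by exact_mod_cast hk
      linarith
    have hD : (0:ℝ) ≤ ∑ j : Fin n, ∑ k : Fin (min n m), max (1 - α j - β k) 0 :=
      Finset.sum_nonneg fun j _ => Finset.sum_nonneg fun k _ => le_max_right _ _
    have hC : (∑ j : Fin n, max (1 - α j) 0) ≤ (n:ℝ) := by
      calc (∑ j : Fin n, max (1 - α j) 0) ≤ ∑ _j : Fin n, (1:ℝ) :=
            Finset.sum_le_sum fun j _ => max_le (by linarith [hα0 j]) zero_le_one
        _ = n := by simp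
    have hmC : (m:ℝ) * (∑ j : Fin n, max (1 - α j) 0) ≤ (m:ℝ) * n :=
      mul_le_mul_of_nonneg_left hC (Nat.cast_nonneg m)
    linarith
  · exact ⟨fun _ => 1, fun k => if (k : ℕ) < l then 0 else 1, hfeas, hval.symm⟩
end

section
/- Fix integers $n,m\ge 1$, set $l_0=\min(n,\lfloor (m+1)/3\rfloor)$, and let $l\in\{0,1,\ldots,l_0\}$. Consider the minimization of $F(\alpha,\beta)=\sum_{j=1}^{n}(2n-2j+1)\alpha_j+\sum_{k=1}^{n\wedge m}(n+m-2k+1)\beta_k - m\sum_{j=1}^{n}(1-\alpha_j)^+ + \sum_{j=1}^{n}\sum_{k=1}^{n\wedge m}(1-\alpha_j-\beta_k)^+$ over all $0\le\alpha_1\le\ldots\le\alpha_{n}$ and $0\le\beta_1\le\ldots\le\beta_{n\wedge m}$ satisfying $\sum_{j=1}^{n}(1-\alpha_j)^+ + \tfrac12\sum_{k=1}^{n\wedge m}(1-\beta_k)^+\le r$ and $\alpha_j+\beta_k\ge 1$ whenever $j+k=n+1$, with target rate $r=n-l/2$. Then the point given by $\alpha_1^*=\ldots=\alpha_{n-l}^*=0$,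 $\alpha_{n-l+1}^*=\ldots=\alpha_n^*=1$, $\beta_1^*=\ldots=\beta_l^*=0$, $\beta_{l+1}^*=\ldots=\beta_{n\wedge m}^*=1$ satisfies all the constraints and has objective value $F(\alpha^*,\beta^*)=l^2$; consequently the minimum is at most $l^2$. -/
open Finset

lemma gaussR (N : ℕ) : ∑ j ∈ range N, (j:ℝ) = N*(N-1)/2 := by
  induction N with
  | zero => simp
  | succ N ih => rw [Finset.sum_range_succ, ih]; push_cast; ring

lemma sumlinR (C : ℝ) (N : ℕ) : ∑ j ∈ range N, (C - 2*(j:ℝ)) = N*C - N*(N-1) := by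
  rw [Finset.sum_sub_distrib, Finset.sum_const, ← Finset.mul_sum, gaussR, card_range,
    nsmul_eq_mul]
  ring

lemma sumlinIco (C : ℝ) (a b : ℕ) (h : a ≤ b) :
    ∑ j ∈ Finset.Ico a b, (C - 2*(j:ℝ)) =
      ((b:ℝ) - a) * C - ((b:ℝ)*(b-1) - (a:ℝ)*(a-1)) := by
  rw [Finset.sum_Ico_eq_sub _ h, sumlinR, sumlinR]; ring

lemma splitSum (N t : ℕ) (h : t ≤ N) (f g : ℕ → ℝ) :
    ∑ j ∈ range N, (if j < t then f j else g j) =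
      (∑ j ∈ range t, f j) + ∑ j ∈ Finset.Ico t N, g j := by
  rw [Finset.range_eq_Ico, ← Finset.sum_Ico_consecutive _ (Nat.zero_le t) h,
    ← Finset.range_eq_Ico]
  congr 1
  · exact Finset.sum_congr rfl fun j hj => by simp [Finset.mem_range.mp hj]
  · exact Finset.sum_congr rfl fun j hj => by
      simp [Nat.not_lt.mpr (Finset.mem_Ico.mp hj).1]

lemma countSum (N t : ℕ) (h : t ≤ N) :
    ∑ j ∈ range N, (if j < t then (1:ℝ) else 0) = t := by
  rw [splitSum N t h]; simp


theorem stmt_16 (n m : ℕ) (hn : 1 ≤ n) (hm : 1 ≤ m) (l : ℕ)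
    (hl : l ≤ min n ((m + 1) / 3)) :
    Feasible n m ((n : ℝ) - (l : ℝ) / 2)
        (fun j => if (j : ℕ) < n - l then 0 else 1)
        (fun k => if (k : ℕ) < l then 0 else 1) ∧
    Fobj n m (fun j => if (j : ℕ) < n - l then 0 else 1)
        (fun k => if (k : ℕ) < l then 0 else 1) = (l : ℝ) ^ 2 ∧
    sInf {x : ℝ | ∃ (α : Fin n → ℝ) (β : Fin (min n m) → ℝ),
        Feasible n m ((n : ℝ) - (l : ℝ) / 2) α β ∧ x = Fobj n m α β} ≤ (l : ℝ) ^ 2 := by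
  have hln : l ≤ n := by omega
  have hlm : l ≤ m := by omega
  have hq : l ≤ min n m := by omega
  have hnl : n - l ≤ n := Nat.sub_le n l
  -- sums of the max-terms
  have hA : (∑ j : Fin n, max (1 - (if ((j:ℕ) < n - l) then (0:ℝ) else 1)) 0)
      = ((n - l : ℕ) : ℝ) := by
    rw [Fin.sum_univ_eq_sum_range
      (fun j => max (1 - (if (j < n - l) then (0:ℝ) else 1)) 0) n]
    rw [Finset.sum_congr rfl (fun j _ =>
      show max (1 - (if j < n - l then (0:ℝ) else 1)) 0
        = if j < n - l then (1:ℝ) else 0 by split <;> norm_num)]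
    exact countSum n (n - l) hnl
  have hB : (∑ k : Fin (min n m), max (1 - (if ((k:ℕ) < l) then (0:ℝ) else 1)) 0)
      = (l : ℝ) := by
    rw [Fin.sum_univ_eq_sum_range
      (fun k => max (1 - (if (k < l) then (0:ℝ) else 1)) 0) (min n m)]
    rw [Finset.sum_congr rfl (fun k _ =>
      show max (1 - (if k < l then (0:ℝ) else 1)) 0
        = if k < l then (1:ℝ) else 0 by split <;> norm_num)]
    exact countSum (min n m) l hq
  -- feasibility
  have feas : Feasible n m ((n : ℝ) - (l : ℝ) / 2)
      (fun j => if (j : ℕ) < n - l then 0 else 1)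
      (fun k => if (k : ℕ) < l then 0 else 1) := by
    refine ⟨?_, ?_, ?_, ?_, ?_, ?_⟩
    · intro j; dsimp only; split <;> norm_num
    · intro a b hab
      have h : (a : ℕ) ≤ (b : ℕ) := hab
      dsimp only
      split_ifs with h1 h2 h2 <;> first | (exfalso; omega) | norm_num
    · intro k; dsimp only; split <;> norm_num
    · intro a b hab
      have h : (a : ℕ) ≤ (b : ℕ) := hab
      dsimp only
      split_ifs with h1 h2 h2 <;> first | (exfalso; omega) | norm_num
    · rw [hA, hB]
      rw [Nat.cast_sub hln]
      linarith
    · intro j k hjk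
      dsimp only
      split_ifs with h1 h2 <;> first | (exfalso; omega) | norm_num
  -- objective value
  have P1 : (∑ j : Fin n, (2 * (n : ℝ) - 2 * ((j : ℕ) + 1) + 1) *
      (if (j:ℕ) < n - l then 0 else 1))
      = ((n:ℝ) - ((n-l:ℕ):ℝ)) * (2*(n:ℝ) - 1)
        - ((n:ℝ)*((n:ℝ)-1) - ((n-l:ℕ):ℝ)*(((n-l:ℕ):ℝ)-1)) := by
    rw [Fin.sum_univ_eq_sum_range
      (fun j => (2 * (n : ℝ) - 2 * ((j:ℕ) + 1) + 1) * (if j < n - l then 0 else 1)) n]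
    rw [Finset.sum_congr rfl (fun j _ =>
      show (2 * (n : ℝ) - 2 * ((j:ℕ) + 1) + 1) * (if j < n - l then 0 else 1)
        = if j < n - l then (0:ℝ) else ((2*(n:ℝ) - 1) - 2*(j:ℝ)) by
        split <;> ring)]
    rw [splitSum n (n - l) hnl (fun _ => (0:ℝ)) (fun j => (2*(n:ℝ) - 1) - 2*(j:ℝ))]
    rw [sumlinIco (2*(n:ℝ) - 1) (n - l) n hnl]
    simp
  have P2 : (∑ k : Fin (min n m), ((n : ℝ) + m - 2 * ((k : ℕ) + 1) + 1) *
      (if (k:ℕ) < l then 0 else 1))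
      = (((min n m : ℕ):ℝ) - (l:ℝ)) * ((n:ℝ) + m - 1)
        - (((min n m : ℕ):ℝ)*(((min n m : ℕ):ℝ)-1) - (l:ℝ)*((l:ℝ)-1)) := by
    rw [Fin.sum_univ_eq_sum_range
      (fun k => ((n : ℝ) + m - 2 * ((k:ℕ) + 1) + 1) * (if k < l then 0 else 1)) (min n m)]
    rw [Finset.sum_congr rfl (fun k _ =>
      show ((n : ℝ) + m - 2 * ((k:ℕ) + 1) + 1) * (if k < l then 0 else 1)
        = if k < l then (0:ℝ) else (((n:ℝ) + m - 1) - 2*(k:ℝ)) by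
        split <;> ring)]
    rw [splitSum (min n m) l hq (fun _ => (0:ℝ)) (fun k => ((n:ℝ) + m - 1) - 2*(k:ℝ))]
    rw [sumlinIco ((n:ℝ) + m - 1) l (min n m) hq]
    simp
  have hinner : ∀ j : ℕ, (∑ k ∈ range (min n m),
      max (1 - (if j < n - l then (0:ℝ) else 1) - (if k < l then 0 else 1)) 0)
      = if j < n - l then (l:ℝ) else 0 := by
    intro j
    by_cases hj : j < n - l
    · simp only [hj, if_true]
      rw [Finset.sum_congr rfl (fun k _ =>
        show max (1 - (0:ℝ) - (if k < l then (0:ℝ) else 1)) 0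
          = if k < l then (1:ℝ) else 0 by split <;> norm_num)]
      exact countSum (min n m) l hq
    · simp only [hj, if_false]
      apply Finset.sum_eq_zero
      intro k _
      split <;> norm_num
  have hinnerF : ∀ j : ℕ, (∑ k : Fin (min n m),
      max (1 - (if j < n - l then (0:ℝ) else 1) - (if (k:ℕ) < l then 0 else 1)) 0)
      = if j < n - l then (l:ℝ) else 0 := by
    intro j
    rw [Fin.sum_univ_eq_sum_range
      (fun k => max (1 - (if j < n - l then (0:ℝ) else 1) - (if k < l then 0 else 1)) 0)
      (min n m)]
    exact hinner j
  have P4 : (∑ j : Fin n, ∑ k : Fin (min n m),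
      max (1 - (if (j:ℕ) < n - l then (0:ℝ) else 1) - (if (k:ℕ) < l then 0 else 1)) 0)
      = ((n-l:ℕ):ℝ) * (l:ℝ) := by
    rw [Fin.sum_univ_eq_sum_range
      (fun j => ∑ k : Fin (min n m),
        max (1 - (if j < n - l then (0:ℝ) else 1) - (if (k:ℕ) < l then 0 else 1)) 0) n]
    rw [Finset.sum_congr rfl (fun j _ => hinnerF j)]
    rw [splitSum n (n - l) hnl (fun _ => (l:ℝ)) (fun _ => 0)]
    simp [mul_comm]
  have hobj : Fobj n m (fun j => if (j : ℕ) < n - l then 0 else 1)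
      (fun k => if (k : ℕ) < l then 0 else 1) = (l : ℝ) ^ 2 := by
    unfold Fobj
    rw [P1, P2, hA, P4]
    rcases le_total n m with h | h
    · rw [min_eq_left h, Nat.cast_sub hln]; ring
    · rw [min_eq_right h, Nat.cast_sub hln]; ring
  -- bounded below
  have hbdd : BddBelow {x : ℝ | ∃ (α : Fin n → ℝ) (β : Fin (min n m) → ℝ),
      Feasible n m ((n : ℝ) - (l : ℝ) / 2) α β ∧ x = Fobj n m α β} := by
    refine ⟨-((m:ℝ) * n), ?_⟩
    rintro x ⟨α, β, ⟨hα0, _, hβ0, _, _, _⟩, rfl⟩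
    unfold Fobj
    have t1 : 0 ≤ ∑ j : Fin n, (2 * (n : ℝ) - 2 * ((j : ℕ) + 1) + 1) * α j := by
      apply Finset.sum_nonneg
      intro j _
      apply mul_nonneg _ (hα0 j)
      have h1 : (j : ℕ) + 1 ≤ n := j.2
      have h2 : ((j:ℕ):ℝ) + 1 ≤ (n:ℝ) := by exact_mod_cast h1
      linarith
    have t2 : 0 ≤ ∑ k : Fin (min n m), ((n : ℝ) + m - 2 * ((k : ℕ) + 1) + 1) * β k := by
      apply Finset.sum_nonneg
      intro k _
      apply mul_nonneg _ (hβ0 k)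
      have h1 : (k : ℕ) + 1 ≤ n := le_trans k.2 (min_le_left n m)
      have h2 : (k : ℕ) + 1 ≤ m := le_trans k.2 (min_le_right n m)
      have h3 : ((k:ℕ):ℝ) + 1 ≤ (n:ℝ) := by exact_mod_cast h1
      have h4 : ((k:ℕ):ℝ) + 1 ≤ (m:ℝ) := by exact_mod_cast h2
      linarith
    have t4 : 0 ≤ ∑ j : Fin n, ∑ k : Fin (min n m), max (1 - α j - β k) 0 :=
      Finset.sum_nonneg fun j _ => Finset.sum_nonneg fun k _ => le_max_right _ _
    have t3 : (∑ j : Fin n, max (1 - α j) 0) ≤ (n : ℝ) := by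
      calc (∑ j : Fin n, max (1 - α j) 0) ≤ ∑ _j : Fin n, (1:ℝ) := by
            apply Finset.sum_le_sum
            intro j _
            exact max_le (by linarith [hα0 j]) zero_le_one
        _ = (n:ℝ) := by simp
    have t3' : (m:ℝ) * (∑ j : Fin n, max (1 - α j) 0) ≤ (m:ℝ) * n :=
      mul_le_mul_of_nonneg_left t3 (by positivity)
    linarith
  exact ⟨feas, hobj, csInf_le hbdd ⟨_, _, feas, hobj.symm⟩⟩
end
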